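/- UCT tracking property: If a* maximizes the UCT selection criterion a ↦ q(a) + c·√(π_θ(a)·log(N)/(1 + n(a))) over 𝒜, then π̂(a*) ≤ π̄_UCT(a*). -/

import Mathlib

/-!
The empirical distribution `π̂` and `π̄_UCT` are both probability vectors, so if
`π̂(a*) > π̄(a*)` some other action `b` has `π̂(b) < π̄(b)`. The UCT criterion equals
`q(a) + λ √(π_θ(a) / π̂(a))`, while `π̄_UCT` makes `q(a) + λ √(π_θ(a) / π̄(a))` constant; since
`x ↦ √(π_θ / x)` is strictly antitone, the criterion at `b` then exceeds the one at `a*`.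
-/

theorem Finset.exists_lt_of_sum_eq_of_lt {ι M : Type*} [AddCommMonoid M] [LinearOrder M]
    [IsOrderedCancelAddMonoid M] {s : Finset ι} {f g : ι → M} (hsum : ∑ i ∈ s, f i = ∑ i ∈ s, g i)
    {i : ι} (hi : i ∈ s) (hlt : g i < f i) : ∃ j ∈ s, f j < g j := by
  by_contra! hle
  exact (Finset.sum_lt_sum hle ⟨i, hi, hlt⟩).ne' hsum

theorem Real.sqrt_div_lt_sqrt_div {w x y : ℝ} (hw : 0 < w) (hx : 0 < x) (hxy : x < y) :
    √(w / y) < √(w / x) :=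
  Real.sqrt_lt_sqrt (div_nonneg hw.le (hx.trans hxy).le) (div_lt_div_of_pos_left hw hx hxy)

theorem Real.sqrt_mul_div_eq_sqrt_div_mul_sqrt_div {w L m D : ℝ} (hL : 0 ≤ L) (hD : 0 < D) :
    √(w * L / m) = √(L / D) * √(w / (m / D)) := by
  rw [← Real.sqrt_mul (div_nonneg hL hD.le)]
  congr 1
  rcases eq_or_ne m 0 with rfl | hm
  · simp
  · field_simp

theorem le_of_isMax_score_of_score_eq {ι : Type*} [Fintype ι] {q w p r : ι → ℝ} {lam α : ℝ}
    (hlam : 0 < lam) (hw : ∀ a, 0 < w a) (hp : ∀ a, 0 < p a) (hr : ∀ a, 0 < r a)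
    (hsum : ∑ a, p a = ∑ a, r a) (heq : ∀ a, q a + lam * √(w a / r a) = α) {a₀ : ι}
    (hmax : ∀ b, q b + lam * √(w b / p b) ≤ q a₀ + lam * √(w a₀ / p a₀)) :
    p a₀ ≤ r a₀ := by
  by_contra! hlt
  obtain ⟨b, -, hb⟩ := Finset.exists_lt_of_sum_eq_of_lt hsum (Finset.mem_univ a₀) hlt
  have h₀ := mul_lt_mul_of_pos_left (Real.sqrt_div_lt_sqrt_div (hw a₀) (hr a₀) hlt) hlam
  have hb := mul_lt_mul_of_pos_left (Real.sqrt_div_lt_sqrt_div (hw b) (hp b) hb) hlam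
  linarith [hmax b, heq a₀, heq b]

theorem sum_one_add_div_card_add_sum {A : Type*} [Fintype A] (n : A → ℝ)
    (h : (Fintype.card A : ℝ) + ∑ b, n b ≠ 0) :
    ∑ a, (1 + n a) / ((Fintype.card A : ℝ) + ∑ b, n b) = 1 := by
  rw [← Finset.sum_div, Finset.sum_add_distrib, Finset.sum_const, Finset.card_univ,
    nsmul_eq_mul, mul_one, div_self h]

theorem uct_pihat_le_pibar_general
    {A : Type*} [Fintype A]
    (n q piTheta : A → ℝ) (c : ℝ)
    (hn : ∀ b, 0 ≤ n b)
    (hN : 1 < ∑ b, n b)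
    (hc : 0 < c)
    (hpiTheta : ∀ a, 0 < piTheta a)
    (lam : ℝ)
    (hlam : lam = c * Real.sqrt (Real.log (∑ b, n b) / ((Fintype.card A : ℝ) + ∑ b, n b)))
    (pihat pibarUCT : A → ℝ)
    (hpihat : ∀ a, pihat a = (1 + n a) / ((Fintype.card A : ℝ) + ∑ b, n b))
    (hpibarPos : ∀ a, 0 < pibarUCT a)
    (hpibarSum : ∑ a, pibarUCT a = 1)
    (α : ℝ)
    (hopt : ∀ a, q a + lam * Real.sqrt (piTheta a / pibarUCT a) = α)
    (astar : A)
    (hastar : ∀ b, q b + c * Real.sqrt (piTheta b * Real.log (∑ b', n b') / (1 + n b))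
        ≤ q astar + c * Real.sqrt (piTheta astar * Real.log (∑ b', n b') / (1 + n astar))) :
    pihat astar ≤ pibarUCT astar := by
  have hD : 0 < (Fintype.card A : ℝ) + ∑ b, n b := by
    linarith [(Fintype.card A).cast_nonneg (α := ℝ)]
  have hlog : 0 < Real.log (∑ b, n b) := Real.log_pos hN
  have hpihatPos : ∀ a, 0 < pihat a := fun a => by
    rw [hpihat a]
    exact div_pos (by linarith [hn a]) hD
  have hpihatSum : ∑ a, pihat a = 1 := by
    simp only [hpihat]
    exact sum_one_add_div_card_add_sum n hD.ne'
  have hscore : ∀ a, c * √(piTheta a * Real.log (∑ b, n b) / (1 + n a))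
      = lam * √(piTheta a / pihat a) := fun a => by
    rw [hlam, hpihat a, mul_assoc, Real.sqrt_mul_div_eq_sqrt_div_mul_sqrt_div hlog.le hD]
  refine le_of_isMax_score_of_score_eq (by rw [hlam]; positivity) hpiTheta hpihatPos hpibarPos
    (hpihatSum.trans hpibarSum.symm) hopt fun b => ?_
  simpa only [hscore] using hastar b

/-- UCT tracking property: if `a*` maximizes the UCT selection criterion, then
`π̂(a*) ≤ π̄_UCT(a*)`. -/
theorem uct_pihat_le_pibar
    {A : Type*} [Fintype A] [Nonempty A]
    (n q piTheta : A → ℝ) (c : ℝ)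
    (hn : ∀ b, 0 ≤ n b)
    (hN : 1 < ∑ b, n b)
    (hc : 0 < c)
    (hpiTheta : ∀ a, 0 < piTheta a)
    (hpiThetaSum : ∑ a, piTheta a = 1)
    (lam : ℝ)
    (hlam : lam = c * Real.sqrt (Real.log (∑ b, n b) / ((Fintype.card A : ℝ) + ∑ b, n b)))
    (pihat pibarUCT : A → ℝ)
    (hpihat : ∀ a, pihat a = (1 + n a) / ((Fintype.card A : ℝ) + ∑ b, n b))
    (hpibarPos : ∀ a, 0 < pibarUCT a)
    (hpibarSum : ∑ a, pibarUCT a = 1)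
    (α : ℝ)
    (hopt : ∀ a, q a + lam * Real.sqrt (piTheta a / pibarUCT a) = α)
    (astar : A)
    (hastar : ∀ b, q b + c * Real.sqrt (piTheta b * Real.log (∑ b', n b') / (1 + n b))
        ≤ q astar + c * Real.sqrt (piTheta astar * Real.log (∑ b', n b') / (1 + n astar))) :
    pihat astar ≤ pibarUCT astar :=
  uct_pihat_le_pibar_general n q piTheta c hn hN hc hpiTheta lam hlam pihat pibarUCT hpihat
    hpibarPos hpibarSum α hopt astar hastar
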